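/- Let F be the 6×6 real matrix with rows (0,1,0,0,0,0), (1,2,2,1,0,0), (0,2,2,0,1,1), (0,1,0,0,0,0), (0,0,1,0,0,0), (0,0,1,0,0,0), and let v = (1, 2+√6, 2+√6, 1, 1, 1) ∈ ℝ⁶. Then F·v = (2+√6)·v, v has strictly positive entries, and every complex eigenvalue of F has absolute value at most 2+√6 (i.e. 2+√6 is the Perron–Frobenius eigenvalue of F). -/

import Mathlib

open Matrix

/-- The fundamental annular matrix `F_{0,1}` of the exceptional quantum subgroup
`E₄(G₂)` (action of the basic representation of G2 at level 4). -/
noncomputable def F : Matrix (Fin 6) (Fin 6) ℝ :=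
  !![0, 1, 0, 0, 0, 0;
     1, 2, 2, 1, 0, 0;
     0, 2, 2, 0, 1, 1;
     0, 1, 0, 0, 0, 0;
     0, 0, 1, 0, 0, 0;
     0, 0, 1, 0, 0, 0]

/-- The vector of quantum dimensions of the simple objects of `E₄(G₂)`. -/
noncomputable def v : Fin 6 → ℝ := ![1, 2 + Real.sqrt 6, 2 + Real.sqrt 6, 1, 1, 1]

/-! The eigenvector equation is a direct computation with `(√6)² = 6`. For the bound, take an
eigenvector `w` of `F` for `μ` and an index `i` maximising `‖w i‖ / v i =: R`, so that
`‖w‖ ≤ R • v` entrywise. Since `F` is nonnegative,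
`‖μ‖ ‖w i‖ = ‖(F w) i‖ ≤ R (F v) i = (2 + √6) R v i = (2 + √6) ‖w i‖`. -/

namespace Matrix

variable {ι : Type*} [Fintype ι]

lemma norm_map_ofReal_mulVec_apply_le {A : Matrix ι ι ℝ} (hA : ∀ i j, 0 ≤ A i j) {w : ι → ℂ}
    {x : ι → ℝ} {c : ℝ} (hw : ∀ j, ‖w j‖ ≤ c * x j) (i : ι) :
    ‖(A.map Complex.ofReal *ᵥ w) i‖ ≤ c * (A *ᵥ x) i :=
  calc ‖(A.map Complex.ofReal *ᵥ w) i‖ = ‖∑ j, (A i j : ℂ) * w j‖ := rfl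
    _ ≤ ∑ j, ‖(A i j : ℂ) * w j‖ := norm_sum_le _ _
    _ = ∑ j, A i j * ‖w j‖ := by
        simp only [norm_mul, Complex.norm_real, Real.norm_of_nonneg (hA i _)]
    _ ≤ ∑ j, A i j * (c * x j) := by gcongr with j; exacts [hA i j, hw j]
    _ = c * (A *ᵥ x) i := by simp only [mulVec, dotProduct, Finset.mul_sum, mul_left_comm]

theorem norm_le_of_mulVec_eq_smul_of_pos {A : Matrix ι ι ℝ} (hA : ∀ i j, 0 ≤ A i j)
    {x : ι → ℝ} (hx : ∀ i, 0 < x i) {r : ℝ} (hAx : A *ᵥ x = r • x) {μ : ℂ} {w : ι → ℂ}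
    (hw : w ≠ 0) (hAw : A.map Complex.ofReal *ᵥ w = μ • w) : ‖μ‖ ≤ r := by
  obtain ⟨j, hj⟩ := Function.ne_iff.mp hw
  have : Nonempty ι := ⟨j⟩
  obtain ⟨i, hi⟩ := Finite.exists_max fun i => ‖w i‖ / x i
  have hwx : ∀ j, ‖w j‖ ≤ ‖w i‖ / x i * x j := fun j => (div_le_iff₀ (hx j)).mp (hi j)
  have hwi : 0 < ‖w i‖ :=
    (div_pos_iff_of_pos_right (hx i)).mp ((div_pos (norm_pos_iff.2 hj) (hx j)).trans_le (hi j))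
  refine le_of_mul_le_mul_right ?_ hwi
  calc ‖μ‖ * ‖w i‖ = ‖(A.map Complex.ofReal *ᵥ w) i‖ := by
        rw [hAw, Pi.smul_apply, smul_eq_mul, norm_mul]
    _ ≤ ‖w i‖ / x i * (A *ᵥ x) i := norm_map_ofReal_mulVec_apply_le hA hwx i
    _ = r * ‖w i‖ := by
        rw [hAx, Pi.smul_apply, smul_eq_mul, mul_left_comm, div_mul_cancel₀ _ (hx i).ne']

end Matrix

lemma F_nonneg (i j : Fin 6) : 0 ≤ F i j := by
  fin_cases i <;> fin_cases j <;> simp [F]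

lemma v_pos (i : Fin 6) : 0 < v i := by
  fin_cases i <;> simp [v] <;> positivity

lemma F_mulVec_v : F *ᵥ v = (2 + Real.sqrt 6) • v := by
  have h6 : Real.sqrt 6 ^ 2 = 6 := Real.sq_sqrt (by norm_num)
  ext i
  fin_cases i <;> simp [F, v, mulVec, dotProduct, Fin.sum_univ_six] <;> linear_combination -h6

/-- `2+√6` is the Perron–Frobenius eigenvalue of `F`, with strictly positive
eigenvector `v`: `F·v = (2+√6)·v`, `v > 0`, and every complex eigenvalue of `F`
has absolute value at most `2+√6`. -/
theorem perron_frobenius_E4_G2 :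
    F.mulVec v = (2 + Real.sqrt 6) • v ∧
    (∀ i, 0 < v i) ∧
    (∀ (μ : ℂ) (w : Fin 6 → ℂ), w ≠ 0 →
      (F.map (Complex.ofReal)).mulVec w = μ • w → ‖μ‖ ≤ 2 + Real.sqrt 6) :=
  ⟨F_mulVec_v, v_pos, fun _ _ hw hFw =>
    Matrix.norm_le_of_mulVec_eq_smul_of_pos F_nonneg v_pos F_mulVec_v hw hFw⟩
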